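/- In a group-cograded weak Hopf quasigroup H over a group G, for all p ∈ G and h, g ∈ H_p: gh = (g ε_p^t(h_{(1,e)})) h_{(2,p)} = ε_p^t(g_{(1,e)})(g_{(2,p)} h) = g_{(1,p)}(ε_p^s(g_{(2,e)}) h) = (g h_{(1,p)}) ε_p^s(h_{(2,e)}). -/

import Mathlib

/-!
Parts (2) and (4) do not involve the antipode. For (2), write
`gh = ε_t((gh)₁)(gh)₂ = ε_t(g₁h₁)(g₂h₂)`; the weak multiplicativity of `ε` splits
`ε_t(g₁h₁) = ε_t(g₁)ε(g₂h₁)`, and after coassociativity `ε(g₂h₁)g₃h₂ = ε((g₂h)₁)(g₂h)₂ = g₂h`.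
Part (4) is the mirror image. Parts (1) and (3) reduce to (4) and (2) through the antipode:
`gε_t(h₁) = (gh₁)S(h₂)` by (3.9), and `((gh₁)S(h₂))h₃ = (gh₁)ε_s(h₂)` by coassociativity and
(3.10); symmetrically with (3.7) and (3.8).
-/

noncomputable section

open TensorProduct

namespace WHQPaper

variable (k : Type*) [Field k]

/-- `(a ⊗ b) ↦ f a * g b` into the scalars. -/
def sc2 {M N : Type*} [AddCommGroup M] [Module k M] [AddCommGroup N] [Module k N]
    (f : M →ₗ[k] k) (g : N →ₗ[k] k) : M ⊗[k] N →ₗ[k] k :=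
  (LinearMap.mul' k k).comp (TensorProduct.map f g)

/-- `(a ⊗ b) ↦ f a • g b`. -/
def sm2 {M N P : Type*} [AddCommGroup M] [Module k M] [AddCommGroup N] [Module k N]
    [AddCommGroup P] [Module k P] (f : M →ₗ[k] k) (g : N →ₗ[k] P) : M ⊗[k] N →ₗ[k] P :=
  TensorProduct.lift ((LinearMap.lsmul k P).compl₁₂ f g)

/-- `(a ⊗ b) ↦ m (f a) (g b)`. -/
def mu2 {M N A B C : Type*} [AddCommGroup M] [Module k M] [AddCommGroup N] [Module k N]
    [AddCommGroup A] [Module k A] [AddCommGroup B] [Module k B] [AddCommGroup C] [Module k C]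
    (m : A →ₗ[k] B →ₗ[k] C) (f : M →ₗ[k] A) (g : N →ₗ[k] B) : M ⊗[k] N →ₗ[k] C :=
  TensorProduct.lift (m.compl₁₂ f g)

/-- the bilinear map `(a ⊗ b) ↦ (c ⊗ d) ↦ (f a c) ⊗ (g b d)`. -/
def pair2 {A B C D E₁ E₂ : Type*} [AddCommGroup A] [Module k A] [AddCommGroup B] [Module k B]
    [AddCommGroup C] [Module k C] [AddCommGroup D] [Module k D]
    [AddCommGroup E₁] [Module k E₁] [AddCommGroup E₂] [Module k E₂]
    (f : A →ₗ[k] C →ₗ[k] E₁) (g : B →ₗ[k] D →ₗ[k] E₂) :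
    (A ⊗[k] B) →ₗ[k] (C ⊗[k] D) →ₗ[k] (E₁ ⊗[k] E₂) :=
  TensorProduct.lift ((TensorProduct.mapBilinear (σ₁₂ := RingHom.id k) (M := C) (N := D) (M₂ := E₁) (N₂ := E₂)).compl₁₂ f g)

variable {G : Type*} [Group G]

/-- transport along an equality of indices. -/
def castH (H : G → Type*) [∀ p, AddCommGroup (H p)] [∀ p, Module k (H p)]
    {p q : G} (e : p = q) : H p →ₗ[k] H q where
  toFun x := e ▸ x
  map_add' := by subst e; intros; rfl
  map_smul' := by subst e; intros; rfl

variable (G)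

/-- A group-cograded weak Hopf quasigroup: a family of (not necessarily associative)
unital algebras `(H_p)_{p ∈ G}`, comultiplications `Δ_{p,q} : H_{pq} → H_p ⊗ H_q` which are
coassociative algebra maps, a counit `ε : H_e → k` and an antipode
`S = (S_p : H_p → H_{p⁻¹})`, subject to the axioms of Definition 3.1, together with the
four (co)unital maps `ε^t_p, ε^s_p, ε̃^t_p, ε̃^s_p : H_e → H_p` given by their defining
formulas. -/
structure GCWHQ (H : G → Type*) [∀ p, AddCommGroup (H p)] [∀ p, Module k (H p)] where
  mul : ∀ p, H p →ₗ[k] H p →ₗ[k] H p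
  one : ∀ p, H p
  comul : ∀ p q, H (p * q) →ₗ[k] H p ⊗[k] H q
  counit : H 1 →ₗ[k] k
  antS : ∀ p, H p →ₗ[k] H p⁻¹
  εt : ∀ p, H 1 →ₗ[k] H p
  εs : ∀ p, H 1 →ₗ[k] H p
  εt' : ∀ p, H 1 →ₗ[k] H p
  εs' : ∀ p, H 1 →ₗ[k] H p
  one_mul' : ∀ p (h : H p), mul p (one p) h = h
  mul_one' : ∀ p (h : H p), mul p h (one p) = h
  /-- each `Δ_{p,q}` is multiplicative -/
  comul_mul : ∀ p q (h g : H (p * q)),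
    comul p q (mul (p * q) h g) = pair2 k (mul p) (mul q) (comul p q h) (comul p q g)
  coassoc : ∀ p q r (h : H (p * q * r)),
    (TensorProduct.assoc k (H p) (H q) (H r))
        ((TensorProduct.map (comul p q) LinearMap.id) (comul (p * q) r h))
      = (TensorProduct.map LinearMap.id (comul q r))
          (comul p (q * r) (castH k H (mul_assoc p q r) h))
  counit_left : ∀ p (h : H p),
    (TensorProduct.lid k (H p)) ((TensorProduct.map counit LinearMap.id)
      (comul 1 p (castH k H (one_mul p).symm h))) = h
  counit_right : ∀ p (h : H p),
    (TensorProduct.rid k (H p)) ((TensorProduct.map LinearMap.id counit)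
      (comul p 1 (castH k H (mul_one p).symm h))) = h
  eps_assoc : ∀ g h l : H 1, counit (mul 1 (mul 1 g h) l) = counit (mul 1 g (mul 1 h l))
  /-- `ε(ghl) = ε(gh₁)ε(h₂l)` -/
  eps_weak₁ : ∀ g h l : H 1, counit (mul 1 (mul 1 g h) l)
    = sc2 k (counit ∘ₗ mul 1 g) (counit ∘ₗ (mul 1).flip l)
        (comul 1 1 (castH k H (one_mul (1 : G)).symm h))
  /-- `ε(ghl) = ε(gh₂)ε(h₁l)` -/
  eps_weak₂ : ∀ g h l : H 1, counit (mul 1 (mul 1 g h) l)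
    = sc2 k (counit ∘ₗ (mul 1).flip l) (counit ∘ₗ mul 1 g)
        (comul 1 1 (castH k H (one_mul (1 : G)).symm h))
  /-- (3.1): `(Δ_{p,q} ⊗ id)Δ_{pq,r}(1) = (Δ_{p,q}(1) ⊗ 1_r)(1_p ⊗ Δ_{q,r}(1))` -/
  unit_weak₁ : ∀ p q r, (TensorProduct.map (comul p q) LinearMap.id)
      (comul (p * q) r (one (p * q * r)))
    = pair2 k (pair2 k (mul p) (mul q)) (mul r)
        ((comul p q (one (p * q))) ⊗ₜ[k] (one r))
        ((TensorProduct.assoc k (H p) (H q) (H r)).symm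
          ((one p) ⊗ₜ[k] (comul q r (one (q * r)))))
  /-- (3.2): `(Δ_{p,q} ⊗ id)Δ_{pq,r}(1) = (1_p ⊗ Δ_{q,r}(1))(Δ_{p,q}(1) ⊗ 1_r)` -/
  unit_weak₂ : ∀ p q r, (TensorProduct.map (comul p q) LinearMap.id)
      (comul (p * q) r (one (p * q * r)))
    = pair2 k (pair2 k (mul p) (mul q)) (mul r)
        ((TensorProduct.assoc k (H p) (H q) (H r)).symm
          ((one p) ⊗ₜ[k] (comul q r (one (q * r)))))
        ((comul p q (one (p * q))) ⊗ₜ[k] (one r))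
  /-- (3.4): `ε^t_p(h) = ε(1_{(1,e)}h) 1_{(2,p)}` -/
  εt_def : ∀ p (h : H 1), εt p h
    = sm2 k (counit ∘ₗ (mul 1).flip h) LinearMap.id (comul 1 p (one (1 * p)))
  /-- (3.5): `ε^s_p(h) = 1_{(1,p)} ε(h1_{(2,e)})` -/
  εs_def : ∀ p (h : H 1), εs p h
    = sm2 k (counit ∘ₗ mul 1 h) LinearMap.id
        ((TensorProduct.comm k (H p) (H 1)) (comul p 1 (one (p * 1))))
  /-- (3.11): `ε̃^t_p(h) = 1_{(1,p)} ε(1_{(2,e)}h)` -/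
  εt'_def : ∀ p (h : H 1), εt' p h
    = sm2 k (counit ∘ₗ (mul 1).flip h) LinearMap.id
        ((TensorProduct.comm k (H p) (H 1)) (comul p 1 (one (p * 1))))
  /-- (3.12): `ε̃^s_p(h) = ε(h1_{(1,e)}) 1_{(2,p)}` -/
  εs'_def : ∀ p (h : H 1), εs' p h
    = sm2 k (counit ∘ₗ mul 1 h) LinearMap.id (comul 1 p (one (1 * p)))
  /-- (3.6): `S = S * ε_t` -/
  S_conv_εt : ∀ p (h : H p),
    mu2 k (mul p⁻¹) (antS p) (εt p⁻¹) (comul p 1 (castH k H (mul_one p).symm h)) = antS p h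
  /-- (3.6): `S = ε_s * S` -/
  εs_conv_S : ∀ p (h : H p),
    mu2 k (mul p⁻¹) (εs p⁻¹) (antS p) (comul 1 p (castH k H (one_mul p).symm h)) = antS p h
  /-- (3.7): `S(h_{(1,p⁻¹)})(h_{(2,p)}g) = ε^s_p(h)g` -/
  antip₁ : ∀ p (h : H 1) (g : H p),
    mu2 k (mul p) ((castH k H (inv_inv p)) ∘ₗ antS p⁻¹) ((mul p).flip g)
        (comul p⁻¹ p (castH k H (inv_mul_cancel p).symm h))
      = mul p (εs p h) g
  /-- (3.8): `h_{(1,p)}(S(h_{(2,p⁻¹)})g) = ε^t_p(h)g` -/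
  antip₂ : ∀ p (h : H 1) (g : H p),
    mu2 k (mul p) LinearMap.id (((mul p).flip g) ∘ₗ (castH k H (inv_inv p)) ∘ₗ antS p⁻¹)
        (comul p p⁻¹ (castH k H (mul_inv_cancel p).symm h))
      = mul p (εt p h) g
  /-- (3.9): `(gh_{(1,p)})S(h_{(2,p⁻¹)}) = gε^t_p(h)` -/
  antip₃ : ∀ p (h : H 1) (g : H p),
    mu2 k (mul p) (mul p g) ((castH k H (inv_inv p)) ∘ₗ antS p⁻¹)
        (comul p p⁻¹ (castH k H (mul_inv_cancel p).symm h))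
      = mul p g (εt p h)
  /-- (3.10): `(gS(h_{(1,p⁻¹)}))h_{(2,p)} = gε^s_p(h)` -/
  antip₄ : ∀ p (h : H 1) (g : H p),
    mu2 k (mul p) ((mul p g) ∘ₗ (castH k H (inv_inv p)) ∘ₗ antS p⁻¹) LinearMap.id
        (comul p⁻¹ p (castH k H (inv_mul_cancel p).symm h))
      = mul p g (εs p h)

end WHQPaper

namespace WHQPaper

section Tensor

variable {k : Type*} [Field k] {M N P Q A B C X Y : Type*}
  [AddCommGroup M] [Module k M] [AddCommGroup N] [Module k N] [AddCommGroup P] [Module k P]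
  [AddCommGroup Q] [Module k Q] [AddCommGroup A] [Module k A] [AddCommGroup B] [Module k B]
  [AddCommGroup C] [Module k C] [AddCommGroup X] [Module k X] [AddCommGroup Y] [Module k Y]

@[simp] lemma sc2_tmul (f : M →ₗ[k] k) (g : N →ₗ[k] k) (a : M) (b : N) :
    sc2 k f g (a ⊗ₜ b) = f a * g b := rfl

@[simp] lemma sm2_tmul (f : M →ₗ[k] k) (g : N →ₗ[k] P) (a : M) (b : N) :
    sm2 k f g (a ⊗ₜ b) = f a • g b := rfl

@[simp] lemma mu2_tmul (m : A →ₗ[k] B →ₗ[k] C) (f : M →ₗ[k] A) (g : N →ₗ[k] B)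
    (a : M) (b : N) :
    mu2 k m f g (a ⊗ₜ b) = m (f a) (g b) := rfl

@[simp] lemma pair2_tmul (f : M →ₗ[k] P →ₗ[k] A) (g : N →ₗ[k] Q →ₗ[k] B)
    (a : M) (b : N) (c : P) (d : Q) :
    pair2 k f g (a ⊗ₜ b) (c ⊗ₜ d) = f a c ⊗ₜ g b d := rfl

lemma sm2_sum_smul_left {ι : Type*} (s : Finset ι) (c : ι → k) (f : ι → M →ₗ[k] k)
    (g : N →ₗ[k] P) : sm2 k (∑ i ∈ s, c i • f i) g = ∑ i ∈ s, c i • sm2 k (f i) g :=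
  TensorProduct.ext' fun a b => by simp [Finset.sum_smul, smul_smul]

lemma mu2_add_left (m : A →ₗ[k] B →ₗ[k] C) (f₁ f₂ : M →ₗ[k] A) (g : N →ₗ[k] B) :
    mu2 k m (f₁ + f₂) g = mu2 k m f₁ g + mu2 k m f₂ g :=
  TensorProduct.ext' fun a b => by simp

lemma mu2_add_right (m : A →ₗ[k] B →ₗ[k] C) (f : M →ₗ[k] A)
    (g₁ g₂ : N →ₗ[k] B) :
    mu2 k m f (g₁ + g₂) = mu2 k m f g₁ + mu2 k m f g₂ :=
  TensorProduct.ext' fun a b => by simp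

@[simp] lemma mu2_zero_left (m : A →ₗ[k] B →ₗ[k] C) (g : N →ₗ[k] B) :
    mu2 k m (0 : M →ₗ[k] A) g = 0 :=
  TensorProduct.ext' fun a b => by simp

@[simp] lemma mu2_zero_right (m : A →ₗ[k] B →ₗ[k] C) (f : M →ₗ[k] A) :
    mu2 k m f (0 : N →ₗ[k] B) = 0 :=
  TensorProduct.ext' fun a b => by simp

lemma mu2_map (m : A →ₗ[k] B →ₗ[k] C) (f : M →ₗ[k] A) (g : N →ₗ[k] B)
    (φ : P →ₗ[k] M) (ψ : Q →ₗ[k] N) (t : P ⊗[k] Q) :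
    mu2 k m f g (TensorProduct.map φ ψ t) = mu2 k m (f ∘ₗ φ) (g ∘ₗ ψ) t :=
  LinearMap.congr_fun (TensorProduct.ext' fun _ _ => rfl :
    mu2 k m f g ∘ₗ TensorProduct.map φ ψ = mu2 k m (f ∘ₗ φ) (g ∘ₗ ψ)) t

lemma mu2_assoc_symm_tmul (m : A →ₗ[k] B →ₗ[k] C) (m' : X →ₗ[k] Y →ₗ[k] A)
    (f : M →ₗ[k] X) (g : N →ₗ[k] Y) (h : P →ₗ[k] B) (a : M) (r : N ⊗[k] P) :
    mu2 k m (mu2 k m' f g) h ((TensorProduct.assoc k M N P).symm (a ⊗ₜ r))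
      = mu2 k m (m' (f a) ∘ₗ g) h r := by
  induction r using TensorProduct.induction_on with
  | zero => simp
  | tmul b c => rfl
  | add u v hu hv => simp only [TensorProduct.tmul_add, map_add, hu, hv]

lemma mu2_assoc_tmul (m : A →ₗ[k] B →ₗ[k] C) (m' : X →ₗ[k] Y →ₗ[k] B)
    (f : M →ₗ[k] A) (g : N →ₗ[k] X) (h : P →ₗ[k] Y) (r : M ⊗[k] N) (c : P) :
    mu2 k m f (mu2 k m' g h) (TensorProduct.assoc k M N P (r ⊗ₜ c))
      = mu2 k m f (m'.flip (h c) ∘ₗ g) r := by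
  induction r using TensorProduct.induction_on with
  | zero => simp
  | tmul a b => rfl
  | add u v hu hv => simp only [TensorProduct.add_tmul, map_add, hu, hv]

end Tensor

namespace GCWHQ

variable {k : Type*} [Field k] {G : Type*} [Group G] {H : G → Type*}
  [∀ p, AddCommGroup (H p)] [∀ p, Module k (H p)] (A : GCWHQ k G H)

/-- `Δ_{a,b}` precomposed with the transport `H_c → H_{ab}`; every comultiplication in the
axioms has this shape. -/
def comulAt {a b c : G} (e : a * b = c) : H c →ₗ[k] H a ⊗[k] H b :=
  A.comul a b ∘ₗ castH k H e.symm

lemma comulAt_one {a b c : G} (e : a * b = c) :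
    A.comulAt e (A.one c) = A.comul a b (A.one (a * b)) := by
  subst e; rfl

lemma comulAt_mul {a b c : G} (e : a * b = c) (x y : H c) :
    A.comulAt e (A.mul c x y) = pair2 k (A.mul a) (A.mul b) (A.comulAt e x) (A.comulAt e y) := by
  subst e; exact A.comul_mul a b x y

lemma comulAt_coassoc {a b c u v w : G} (hu : a * b = u) (hv : b * c = v) (hw : u * c = w)
    (hw' : a * v = w) (x : H w) :
    TensorProduct.assoc k (H a) (H b) (H c)
        (TensorProduct.map (A.comulAt hu) LinearMap.id (A.comulAt hw x))
      = TensorProduct.map LinearMap.id (A.comulAt hv) (A.comulAt hw' x) := by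
  subst hu hv hw
  exact A.coassoc a b c x

variable (p : G)

lemma sm2_counit_comulAt_one_mul (x : H p) :
    sm2 k A.counit LinearMap.id (A.comulAt (one_mul p) x) = x := by
  have key : sm2 k A.counit LinearMap.id
      = (TensorProduct.lid k (H p)).toLinearMap ∘ₗ TensorProduct.map A.counit LinearMap.id :=
    TensorProduct.ext' fun _ _ => by simp
  rw [key]
  exact A.counit_left p x

lemma sm2_counit_comm_comulAt_mul_one (x : H p) :
    sm2 k A.counit LinearMap.id (TensorProduct.comm k (H p) (H 1) (A.comulAt (mul_one p) x))
      = x := by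
  have key : sm2 k A.counit LinearMap.id ∘ₗ (TensorProduct.comm k (H p) (H 1)).toLinearMap
      = (TensorProduct.rid k (H p)).toLinearMap ∘ₗ TensorProduct.map LinearMap.id A.counit :=
    TensorProduct.ext' fun _ _ => by simp
  exact (LinearMap.congr_fun key _).trans (A.counit_right p x)

lemma εt_conv_id (x : H p) :
    mu2 k (A.mul p) (A.εt p) LinearMap.id (A.comulAt (one_mul p) x) = x := by
  have key : mu2 k (A.mul p) (A.εt p) LinearMap.id
      = sm2 k A.counit LinearMap.id ∘ₗ
          pair2 k (A.mul 1) (A.mul p) (A.comulAt (one_mul p) (A.one p)) := by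
    refine TensorProduct.ext' fun c d => ?_
    rw [mu2_tmul, A.εt_def, comulAt_one]
    induction A.comul 1 p (A.one (1 * p)) using TensorProduct.induction_on with
    | zero => simp
    | tmul a b => simp
    | add r s hr hs => simp_all
  rw [key, LinearMap.comp_apply, ← comulAt_mul, A.one_mul', sm2_counit_comulAt_one_mul]

lemma id_conv_εs (x : H p) :
    mu2 k (A.mul p) LinearMap.id (A.εs p) (A.comulAt (mul_one p) x) = x := by
  have key : mu2 k (A.mul p) LinearMap.id (A.εs p)
      = sm2 k A.counit LinearMap.id ∘ₗ (TensorProduct.comm k (H p) (H 1)).toLinearMap ∘ₗ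
          (pair2 k (A.mul p) (A.mul 1)).flip (A.comulAt (mul_one p) (A.one p)) := by
    refine TensorProduct.ext' fun c d => ?_
    rw [mu2_tmul, A.εs_def, comulAt_one]
    induction A.comul p 1 (A.one (p * 1)) using TensorProduct.induction_on with
    | zero => simp
    | tmul a b => simp
    | add r s hr hs => simp_all
  rw [key, LinearMap.comp_apply, LinearMap.comp_apply, LinearMap.flip_apply, ← comulAt_mul,
    A.mul_one']
  exact A.sm2_counit_comm_comulAt_mul_one p x

/-- `ε_t(uv) = ε(u₂v) ε_t(u₁)`, from the weak multiplicativity of `ε`. -/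
lemma εt_mul (u v : H 1) :
    A.εt p (A.mul 1 u v) = sm2 k (A.counit ∘ₗ (A.mul 1).flip v) (A.εt p)
      (TensorProduct.comm k (H 1) (H 1) (A.comulAt (one_mul 1) u)) := by
  obtain ⟨S, hS⟩ := TensorProduct.exists_finset (A.comulAt (one_mul 1) u)
  have hcounit : A.counit ∘ₗ (A.mul 1).flip (A.mul 1 u v)
      = ∑ i ∈ S, A.counit (A.mul 1 i.2 v) • (A.counit ∘ₗ (A.mul 1).flip i.1) := by
    ext c
    have : A.counit (A.mul 1 c (A.mul 1 u v)) = sc2 k (A.counit ∘ₗ A.mul 1 c)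
        (A.counit ∘ₗ (A.mul 1).flip v) (A.comulAt (one_mul 1) u) := by
      rw [← A.eps_assoc]; exact A.eps_weak₁ c u v
    rw [hS] at this
    simp [this, mul_comm]
  rw [A.εt_def, hcounit, sm2_sum_smul_left, hS]
  simp [A.εt_def]

lemma εs_mul (u v : H 1) :
    A.εs p (A.mul 1 u v)
      = sm2 k (A.counit ∘ₗ A.mul 1 u) (A.εs p) (A.comulAt (one_mul 1) v) := by
  obtain ⟨S, hS⟩ := TensorProduct.exists_finset (A.comulAt (one_mul 1) v)
  have hcounit : A.counit ∘ₗ A.mul 1 (A.mul 1 u v)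
      = ∑ i ∈ S, A.counit (A.mul 1 u i.1) • (A.counit ∘ₗ A.mul 1 i.2) := by
    ext c
    have : A.counit (A.mul 1 (A.mul 1 u v) c) = sc2 k (A.counit ∘ₗ A.mul 1 u)
        (A.counit ∘ₗ (A.mul 1).flip c) (A.comulAt (one_mul 1) v) := A.eps_weak₁ u v c
    rw [hS] at this
    simp [this]
  rw [A.εs_def, hcounit, sm2_sum_smul_left, hS]
  simp [A.εs_def]

/-- `ε_t(t₁s₁) t₂s₂ = ε_t(t₁) ε(t₂s₁) t₃s₂`. -/
lemma mu2_εt_pair2 (t s : H 1 ⊗[k] H p) :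
    mu2 k (A.mul p) (A.εt p) LinearMap.id (pair2 k (A.mul 1) (A.mul p) t s)
      = mu2 k (A.mul p) (A.εt p)
          (sm2 k A.counit LinearMap.id ∘ₗ (pair2 k (A.mul 1) (A.mul p)).flip s)
          (TensorProduct.assoc k (H 1) (H 1) (H p)
            (TensorProduct.map (A.comulAt (one_mul 1)) LinearMap.id t)) := by
  induction t using TensorProduct.induction_on with
  | zero => simp
  | add t₁ t₂ ih₁ ih₂ => simp only [map_add, LinearMap.add_apply, ih₁, ih₂]
  | tmul u x =>
    induction s using TensorProduct.induction_on with
    | zero => simp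
    | add s₁ s₂ ih₁ ih₂ => simp only [map_add, LinearMap.comp_add, mu2_add_right,
        LinearMap.add_apply, ih₁, ih₂]
    | tmul v y =>
      rw [pair2_tmul, mu2_tmul, εt_mul, TensorProduct.map_tmul]
      induction A.comulAt (one_mul 1) u using TensorProduct.induction_on with
      | zero => simp
      | tmul u₁ u₂ => simp
      | add r₁ r₂ ih₁ ih₂ =>
        simp only [map_add, TensorProduct.add_tmul, LinearMap.add_apply, ih₁, ih₂]

/-- `t₁s₁ ε_s(t₂s₂) = ε(t₂s₂) t₁s₁ ε_s(s₃)`. -/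
lemma mu2_εs_pair2 (t s : H p ⊗[k] H 1) :
    mu2 k (A.mul p) LinearMap.id (A.εs p) (pair2 k (A.mul p) (A.mul 1) t s)
      = mu2 k (A.mul p)
          (sm2 k A.counit LinearMap.id ∘ₗ (TensorProduct.comm k (H p) (H 1)).toLinearMap ∘ₗ
            pair2 k (A.mul p) (A.mul 1) t) (A.εs p)
          ((TensorProduct.assoc k (H p) (H 1) (H 1)).symm
            (TensorProduct.map LinearMap.id (A.comulAt (one_mul 1)) s)) := by
  induction t using TensorProduct.induction_on with
  | zero => simp
  | add t₁ t₂ ih₁ ih₂ => simp only [map_add, LinearMap.comp_add, mu2_add_left,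
      LinearMap.add_apply, ih₁, ih₂]
  | tmul x u =>
    induction s using TensorProduct.induction_on with
    | zero => simp
    | add s₁ s₂ ih₁ ih₂ => simp only [map_add, ih₁, ih₂]
    | tmul y v =>
      rw [pair2_tmul, mu2_tmul, εs_mul, TensorProduct.map_tmul]
      induction A.comulAt (one_mul 1) v using TensorProduct.induction_on with
      | zero => simp
      | tmul v₁ v₂ => simp
      | add r₁ r₂ ih₁ ih₂ => simp only [map_add, TensorProduct.tmul_add, ih₁, ih₂]

theorem εt_mul_mul_eq_mul (g h : H p) :
    mu2 k (A.mul p) (A.εt p) ((A.mul p).flip h) (A.comulAt (one_mul p) g) = A.mul p g h := by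
  set Φ := sm2 k A.counit LinearMap.id ∘ₗ
    (pair2 k (A.mul 1) (A.mul p)).flip (A.comulAt (one_mul p) h)
  have hΦ : Φ ∘ₗ A.comulAt (one_mul p) = (A.mul p).flip h := by
    ext x
    simp [Φ, ← comulAt_mul, sm2_counit_comulAt_one_mul]
  calc mu2 k (A.mul p) (A.εt p) ((A.mul p).flip h) (A.comulAt (one_mul p) g)
      = mu2 k (A.mul p) (A.εt p) Φ
          (TensorProduct.map LinearMap.id (A.comulAt (one_mul p))
            (A.comulAt (one_mul p) g)) := by
        rw [mu2_map, hΦ, LinearMap.comp_id]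
    _ = mu2 k (A.mul p) (A.εt p) Φ (TensorProduct.assoc k (H 1) (H 1) (H p)
          (TensorProduct.map (A.comulAt (one_mul 1)) LinearMap.id
            (A.comulAt (one_mul p) g))) := by
        rw [comulAt_coassoc]
    _ = mu2 k (A.mul p) (A.εt p) LinearMap.id (A.comulAt (one_mul p) (A.mul p g h)) := by
        rw [comulAt_mul, mu2_εt_pair2]
    _ = A.mul p g h := εt_conv_id A p _

theorem mul_mul_εs_eq_mul (g h : H p) :
    mu2 k (A.mul p) (A.mul p g) (A.εs p) (A.comulAt (mul_one p) h) = A.mul p g h := by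
  set Ψ := sm2 k A.counit LinearMap.id ∘ₗ (TensorProduct.comm k (H p) (H 1)).toLinearMap ∘ₗ
    pair2 k (A.mul p) (A.mul 1) (A.comulAt (mul_one p) g)
  have hΨ : Ψ ∘ₗ A.comulAt (mul_one p) = A.mul p g := by
    ext x
    simp only [Ψ, LinearMap.comp_apply, ← comulAt_mul]
    exact A.sm2_counit_comm_comulAt_mul_one p _
  calc mu2 k (A.mul p) (A.mul p g) (A.εs p) (A.comulAt (mul_one p) h)
      = mu2 k (A.mul p) Ψ (A.εs p)
          (TensorProduct.map (A.comulAt (mul_one p)) LinearMap.id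
            (A.comulAt (mul_one p) h)) := by
        rw [mu2_map, hΨ, LinearMap.comp_id]
    _ = mu2 k (A.mul p) Ψ (A.εs p) ((TensorProduct.assoc k (H p) (H 1) (H 1)).symm
          (TensorProduct.map LinearMap.id (A.comulAt (one_mul 1))
            (A.comulAt (mul_one p) h))) := by
        rw [← comulAt_coassoc A (mul_one p) (one_mul 1) (mul_one p) (mul_one p),
          LinearEquiv.symm_apply_apply]
    _ = mu2 k (A.mul p) LinearMap.id (A.εs p) (A.comulAt (mul_one p) (A.mul p g h)) := by
        rw [comulAt_mul, mu2_εs_pair2]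
    _ = A.mul p g h := id_conv_εs A p _

def antipodeInv : H p⁻¹ →ₗ[k] H p := castH k H (inv_inv p) ∘ₗ A.antS p⁻¹

theorem mul_εt_mul_eq_mul (g h : H p) :
    mu2 k (A.mul p) (A.mul p g ∘ₗ A.εt p) LinearMap.id (A.comulAt (one_mul p) h)
      = A.mul p g h := by
  set F := mu2 k (A.mul p) (A.mul p g) (A.antipodeInv p)
  have hF : A.mul p g ∘ₗ A.εt p = F ∘ₗ A.comulAt (mul_inv_cancel p) :=
    LinearMap.ext fun x => (A.antip₃ p x g).symm
  have hFεs : mu2 k (A.mul p) F LinearMap.id ∘ₗ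
        (TensorProduct.assoc k (H p) (H p⁻¹) (H p)).symm.toLinearMap ∘ₗ
        TensorProduct.map LinearMap.id (A.comulAt (inv_mul_cancel p))
      = mu2 k (A.mul p) (A.mul p g) (A.εs p) :=
    TensorProduct.ext' fun a w => by
      simpa [F, antipodeInv, comulAt, mu2_assoc_symm_tmul] using A.antip₄ p w (A.mul p g a)
  calc mu2 k (A.mul p) (A.mul p g ∘ₗ A.εt p) LinearMap.id (A.comulAt (one_mul p) h)
      = mu2 k (A.mul p) F LinearMap.id (TensorProduct.map (A.comulAt (mul_inv_cancel p))
          LinearMap.id (A.comulAt (one_mul p) h)) := by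
        rw [hF, mu2_map, LinearMap.id_comp]
    _ = mu2 k (A.mul p) F LinearMap.id ((TensorProduct.assoc k (H p) (H p⁻¹) (H p)).symm
          (TensorProduct.map LinearMap.id (A.comulAt (inv_mul_cancel p))
            (A.comulAt (mul_one p) h))) := by
        rw [← comulAt_coassoc A (mul_inv_cancel p) (inv_mul_cancel p) (one_mul p) (mul_one p),
          LinearEquiv.symm_apply_apply]
    _ = mu2 k (A.mul p) (A.mul p g) (A.εs p) (A.comulAt (mul_one p) h) :=
        LinearMap.congr_fun hFεs _
    _ = A.mul p g h := mul_mul_εs_eq_mul A p g h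

theorem mul_εs_mul_eq_mul (g h : H p) :
    mu2 k (A.mul p) LinearMap.id ((A.mul p).flip h ∘ₗ A.εs p) (A.comulAt (mul_one p) g)
      = A.mul p g h := by
  set F := mu2 k (A.mul p) (A.antipodeInv p) ((A.mul p).flip h)
  have hF : (A.mul p).flip h ∘ₗ A.εs p = F ∘ₗ A.comulAt (inv_mul_cancel p) :=
    LinearMap.ext fun x => (A.antip₁ p x h).symm
  have hFεt : mu2 k (A.mul p) LinearMap.id F ∘ₗ
        (TensorProduct.assoc k (H p) (H p⁻¹) (H p)).toLinearMap ∘ₗ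
        TensorProduct.map (A.comulAt (mul_inv_cancel p)) LinearMap.id
      = mu2 k (A.mul p) (A.εt p) ((A.mul p).flip h) :=
    TensorProduct.ext' fun w y => by
      simpa [F, antipodeInv, comulAt, mu2_assoc_tmul] using A.antip₂ p w (A.mul p y h)
  calc mu2 k (A.mul p) LinearMap.id ((A.mul p).flip h ∘ₗ A.εs p) (A.comulAt (mul_one p) g)
      = mu2 k (A.mul p) LinearMap.id F (TensorProduct.map LinearMap.id
          (A.comulAt (inv_mul_cancel p)) (A.comulAt (mul_one p) g)) := by
        rw [hF, mu2_map, LinearMap.id_comp]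
    _ = mu2 k (A.mul p) LinearMap.id F (TensorProduct.assoc k (H p) (H p⁻¹) (H p)
          (TensorProduct.map (A.comulAt (mul_inv_cancel p)) LinearMap.id
            (A.comulAt (one_mul p) g))) := by
        rw [comulAt_coassoc A (mul_inv_cancel p) (inv_mul_cancel p) (one_mul p) (mul_one p)]
    _ = mu2 k (A.mul p) (A.εt p) ((A.mul p).flip h) (A.comulAt (one_mul p) g) :=
        LinearMap.congr_fun hFεt _
    _ = A.mul p g h := εt_mul_mul_eq_mul A p g h

end GCWHQ
end WHQPaper

open WHQPaper in
/-- In a group-cograded weak Hopf quasigroup, for all `p ∈ G` and `h, g ∈ H_p`: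
`gh = (gε^t_p(h_{(1,e)}))h_{(2,p)} = ε^t_p(g_{(1,e)})(g_{(2,p)}h)
    = g_{(1,p)}(ε^s_p(g_{(2,e)})h) = (gh_{(1,p)})ε^s_p(h_{(2,e)})`. -/
theorem mul_counital_decompositions {k G : Type*} [Field k] [Group G] {H : G → Type*}
    [∀ p, AddCommGroup (H p)] [∀ p, Module k (H p)] (A : GCWHQ k G H)
    (p : G) (h g : H p) :
    mu2 k (A.mul p) ((A.mul p g) ∘ₗ A.εt p) LinearMap.id
        (A.comul 1 p (castH k H (one_mul p).symm h)) = A.mul p g h ∧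
    mu2 k (A.mul p) (A.εt p) ((A.mul p).flip h)
        (A.comul 1 p (castH k H (one_mul p).symm g)) = A.mul p g h ∧
    mu2 k (A.mul p) LinearMap.id (((A.mul p).flip h) ∘ₗ A.εs p)
        (A.comul p 1 (castH k H (mul_one p).symm g)) = A.mul p g h ∧
    mu2 k (A.mul p) (A.mul p g) (A.εs p)
        (A.comul p 1 (castH k H (mul_one p).symm h)) = A.mul p g h :=
  ⟨A.mul_εt_mul_eq_mul p g h, A.εt_mul_mul_eq_mul p g h, A.mul_εs_mul_eq_mul p g h,
    A.mul_mul_εs_eq_mul p g h⟩
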